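/- arXiv:hep-th/9707032 — 2 statements merged into one kernel-verified Lean document; each statement's English description precedes it below -/
import Mathlib

section
/- Let R be a commutative unital ring, Λ an alternating biderivation on R and E a derivation on R, and define the Jacobi bracket {f,g} := Λ(f,g) + f·E(g) − g·E(f). Then the Jacobi identity {f,{g,h}} + {g,{h,f}} + {h,{f,g}} = 0 holds for all f,g,h ∈ R if and only if both of the following hold for all f,g,h ∈ R: (i) [E,Λ](f,g) = 0, and (ii) Λ(f,Λ(g,h)) + Λ(g,Λ(h,f)) + Λ(h,Λ(f,g)) + (E∧Λ)(f,g,h) = 0. -/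
/-- `Λ` is an alternating biderivation on the commutative ring `R`: additive and a derivation in
each argument, and antisymmetric. -/
def IsAltBiderivation {R : Type*} [CommRing R] (Λ : R → R → R) : Prop :=
  (∀ f g h : R, Λ (f + g) h = Λ f h + Λ g h) ∧
  (∀ f g h : R, Λ f (g + h) = Λ f g + Λ f h) ∧
  (∀ f g h : R, Λ f (g * h) = g * Λ f h + h * Λ f g) ∧
  (∀ f g h : R, Λ (f * g) h = f * Λ g h + g * Λ f h) ∧
  (∀ f g : R, Λ f g = -Λ g f)

/-- `E` is a derivation on the commutative ring `R`. -/
def IsDerivationMap {R : Type*} [CommRing R] (E : R → R) : Prop :=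
  (∀ f g : R, E (f + g) = E f + E g) ∧ (∀ f g : R, E (f * g) = f * E g + g * E f)

/-- The Jacobi bracket `{f,g} := Λ(f,g) + f·E(g) - g·E(f)` determined by `Λ` and `E`. -/
def jacobiBracket {R : Type*} [CommRing R] (Λ : R → R → R) (E : R → R) (f g : R) : R :=
  Λ f g + f * E g - g * E f

/-!
Expanding the Jacobiator of `{f,g} = Λ(f,g) + f·E(g) - g·E(f)` by the Leibniz rules, it equals the
Jacobiator of `Λ` plus `(E∧Λ)(f,g,h)` plus `f·[E,Λ](g,h) + g·[E,Λ](h,f) + h·[E,Λ](f,g)`. So (i) and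
(ii) imply the Jacobi identity, and conversely taking `f = 1`, where `Λ(1,·) = 0` and `E(1) = 0`,
leaves exactly `[E,Λ](g,h)`, after which the remaining terms are (ii).
-/

def jacobiator {R : Type*} [Add R] (B : R → R → R) (f g h : R) : R :=
  B f (B g h) + B g (B h f) + B h (B f g)

def derivCommutator {R : Type*} [Sub R] (E : R → R) (Λ : R → R → R) (f g : R) : R :=
  E (Λ f g) - Λ (E f) g - Λ f (E g)

def derivWedge {R : Type*} [Add R] [Mul R] (E : R → R) (Λ : R → R → R) (f g h : R) : R :=
  E f * Λ g h + E g * Λ h f + E h * Λ f g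

section

variable {R : Type*} [CommRing R] {Λ : R → R → R} {E : R → R}

namespace IsDerivationMap

theorem map_sub (hE : IsDerivationMap E) (a b : R) : E (a - b) = E a - E b :=
  (AddMonoidHom.mk' E hE.1).map_sub a b

theorem map_zero (hE : IsDerivationMap E) : E 0 = 0 :=
  (AddMonoidHom.mk' E hE.1).map_zero

theorem map_one (hE : IsDerivationMap E) : E 1 = 0 := by
  simpa using hE.2 1 1

end IsDerivationMap

namespace IsAltBiderivation

theorem map_sub_right (hΛ : IsAltBiderivation Λ) (f a b : R) : Λ f (a - b) = Λ f a - Λ f b :=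
  (AddMonoidHom.mk' (Λ f) (hΛ.2.1 f)).map_sub a b

theorem map_zero_right (hΛ : IsAltBiderivation Λ) (f : R) : Λ f 0 = 0 :=
  (AddMonoidHom.mk' (Λ f) (hΛ.2.1 f)).map_zero

theorem map_zero_left (hΛ : IsAltBiderivation Λ) (f : R) : Λ 0 f = 0 := by
  rw [hΛ.2.2.2.2, hΛ.map_zero_right, neg_zero]

theorem map_one_right (hΛ : IsAltBiderivation Λ) (f : R) : Λ f 1 = 0 := by
  simpa using hΛ.2.2.1 f 1 1

theorem map_one_left (hΛ : IsAltBiderivation Λ) (f : R) : Λ 1 f = 0 := by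
  rw [hΛ.2.2.2.2, hΛ.map_one_right, neg_zero]

end IsAltBiderivation

theorem jacobiator_jacobiBracket (hΛ : IsAltBiderivation Λ) (hE : IsDerivationMap E)
    (f g h : R) :
    jacobiator (jacobiBracket Λ E) f g h =
      jacobiator Λ f g h + derivWedge E Λ f g h +
        (f * derivCommutator E Λ g h + g * derivCommutator E Λ h f +
          h * derivCommutator E Λ f g) := by
  have ⟨_, map_add_right, map_mul_right, _, skew⟩ := hΛ
  have ⟨map_add, map_mul⟩ := hE
  have skew_deriv_left (a b : R) : Λ (E a) b = -Λ b (E a) := skew _ _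
  simp only [jacobiator, derivWedge, derivCommutator, jacobiBracket, hΛ.map_sub_right,
    map_add_right, map_mul_right, hE.map_sub, map_add, map_mul, skew_deriv_left]
  -- the leftover `E`-weighted terms cancel in pairs `Λ(f,g) + Λ(g,f)`
  linear_combination -E h * skew g f - E g * skew f h - E f * skew h g

theorem jacobiator_jacobiBracket_one_left (hΛ : IsAltBiderivation Λ) (hE : IsDerivationMap E)
    (g h : R) : jacobiator (jacobiBracket Λ E) 1 g h = derivCommutator E Λ g h := by
  rw [jacobiator_jacobiBracket hΛ hE]
  simp only [jacobiator, derivWedge, derivCommutator, hΛ.map_one_left, hΛ.map_one_right,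
    hΛ.map_zero_left, hΛ.map_zero_right, hE.map_zero, hE.map_one]
  ring

end

/-- For an alternating biderivation `Λ` and a derivation `E` on a commutative
unital ring `R`, the Jacobi bracket `{f,g} := Λ(f,g) + f·E(g) - g·E(f)` satisfies the Jacobi
identity iff `[E,Λ] = 0` and the Jacobiator of `Λ` plus `(E∧Λ)` vanishes. -/
theorem jacobi_bracket_characterization {R : Type*} [CommRing R] (Λ : R → R → R) (E : R → R)
    (hΛ : IsAltBiderivation Λ) (hE : IsDerivationMap E) :
    (∀ f g h : R,
        jacobiBracket Λ E f (jacobiBracket Λ E g h) +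
        jacobiBracket Λ E g (jacobiBracket Λ E h f) +
        jacobiBracket Λ E h (jacobiBracket Λ E f g) = 0) ↔
      ((∀ f g : R, E (Λ f g) - Λ (E f) g - Λ f (E g) = 0) ∧
       (∀ f g h : R,
          Λ f (Λ g h) + Λ g (Λ h f) + Λ h (Λ f g) +
            (E f * Λ g h + E g * Λ h f + E h * Λ f g) = 0)) := by
  constructor
  · intro hJ
    have hcomm (f g : R) : derivCommutator E Λ f g = 0 :=
      (jacobiator_jacobiBracket_one_left hΛ hE f g).symm.trans (hJ 1 f g)
    refine ⟨hcomm, fun f g h => ?_⟩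
    have expand := jacobiator_jacobiBracket hΛ hE f g h
    simp only [hcomm, mul_zero, add_zero] at expand
    exact expand.symm.trans (hJ f g h)
  · rintro ⟨hcomm, hJΛ⟩ f g h
    have expand := jacobiator_jacobiBracket hΛ hE f g h
    simp only [derivCommutator, hcomm, mul_zero, add_zero] at expand
    exact expand.trans (hJΛ f g h)
end

section
/- There exist a unital associative ℝ-algebra A and elements a, b, c, x, y ∈ A such that the 4-fold antisymmetrized product fails the Leibniz rule: [a, b, c, x·y] ≠ x·[a, b, c, y] + [a, b, c, x]·y, where [a_1,a_2,a_3,a_4] := Σ_{σ∈S_4} sgn(σ) a_{σ(1)}a_{σ(2)}a_{σ(3)}a_{σ(4)}. -/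
/-!
In `M₆(ℝ)` take matrix units along the path `0 → 1 → ⋯ → 5`: `a = E₀₁`, `x = E₁₂`, `y = E₂₃`,
`b = E₃₄`, `c = E₄₅`. A product of matrix units is nonzero exactly when their edges, in the order
of the product, form a walk. The edges of `a, b, c, xy = E₁₃` form a walk in exactly one order,
`a (xy) b c`, so `[a, b, c, xy] = E₀₅`; but neither `a, b, c, x` nor `a, b, c, y` can be ordered
into a walk, so the right-hand side vanishes.
-/

/-- The 4-fold antisymmetrized product
`[a₁,a₂,a₃,a₄] = ∑_{σ ∈ S₄} sgn(σ) a_{σ(1)} a_{σ(2)} a_{σ(3)} a_{σ(4)}`. -/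
def asym4 {A : Type*} [Ring A] (a : Fin 4 → A) : A :=
  ∑ σ : Equiv.Perm (Fin 4), (Equiv.Perm.sign σ : ℤ) • (a (σ 0) * a (σ 1) * a (σ 2) * a (σ 3))

open Matrix Equiv

/-- The edges `s i → t i`, taken in the order `σ`, form a walk. -/
abbrev IsWalk {n : Type*} (s t : Fin 4 → n) (σ : Perm (Fin 4)) : Prop :=
  t (σ 0) = s (σ 1) ∧ t (σ 1) = s (σ 2) ∧ t (σ 2) = s (σ 3)

variable {n R : Type*} [Fintype n] [DecidableEq n]

section Semiring

variable [Semiring R]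

theorem single_one_mul_single_one (i j k l : n) :
    single i j (1 : R) * single k l 1 = if j = k then single i l 1 else 0 := by
  split_ifs with h
  · simp [h]
  · exact single_mul_single_of_ne _ _ _ _ h _

theorem single_mul_single_mul_single_mul_single (s t : Fin 4 → n) (σ : Perm (Fin 4)) :
    single (s (σ 0)) (t (σ 0)) (1 : R) * single (s (σ 1)) (t (σ 1)) 1 *
        single (s (σ 2)) (t (σ 2)) 1 * single (s (σ 3)) (t (σ 3)) 1 =
      if IsWalk s t σ then single (s (σ 0)) (t (σ 3)) 1 else 0 := by
  simp only [single_one_mul_single_one]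
  by_cases h₁ : t (σ 0) = s (σ 1) <;> by_cases h₂ : t (σ 1) = s (σ 2) <;>
    by_cases h₃ : t (σ 2) = s (σ 3) <;> simp [h₁, h₂, h₃]

end Semiring

section Ring

variable [Ring R] {a : Fin 4 → Matrix n n R} {s t : Fin 4 → n}

theorem asym4_eq_zero_of_forall_not_isWalk (ha : ∀ i, a i = single (s i) (t i) 1)
    (h : ∀ σ, ¬ IsWalk s t σ) : asym4 a = 0 := by
  simp only [asym4, ha, single_mul_single_mul_single_mul_single, h]
  simp

theorem asym4_eq_of_isWalk_iff (ha : ∀ i, a i = single (s i) (t i) 1) (σ₀ : Perm (Fin 4))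
    (h : ∀ σ, IsWalk s t σ ↔ σ = σ₀) :
    asym4 a = (Perm.sign σ₀ : ℤ) • single (s (σ₀ 0)) (t (σ₀ 3)) 1 := by
  simp only [asym4, ha, single_mul_single_mul_single_mul_single, h]
  simp

end Ring

/-- There is a unital associative `ℝ`-algebra `A` with elements
`a, b, c, x, y` for which the 4-fold antisymmetrized product fails the Leibniz rule:
`[a,b,c,x·y] ≠ x·[a,b,c,y] + [a,b,c,x]·y`. -/
theorem asym4_fails_leibniz :
    ∃ (A : Type) (_ : Ring A) (_ : Algebra ℝ A) (a b c x y : A),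
      asym4 ![a, b, c, x * y] ≠ x * asym4 ![a, b, c, y] + asym4 ![a, b, c, x] * y := by
  let E : Fin 6 → Fin 6 → Matrix (Fin 6) (Fin 6) ℝ := fun i j => single i j 1
  refine ⟨Matrix (Fin 6) (Fin 6) ℝ, inferInstance, inferInstance,
    E 0 1, E 3 4, E 4 5, E 1 2, E 2 3, ?_⟩
  have hxy : E 1 2 * E 2 3 = E 1 3 := by simp [E]
  have hlhs : asym4 ![E 0 1, E 3 4, E 4 5, E 1 3] = E 0 5 := by
    have hσ : c[(1 : Fin 4), 3, 2] 0 = 0 ∧ c[(1 : Fin 4), 3, 2] 3 = 2 ∧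
        Perm.sign c[(1 : Fin 4), 3, 2] = 1 := by
      decide
    simpa [hσ] using asym4_eq_of_isWalk_iff (a := ![E 0 1, E 3 4, E 4 5, E 1 3])
      (s := ![0, 3, 4, 1]) (t := ![1, 4, 5, 3]) (fun i => by fin_cases i <;> rfl) c[1, 3, 2]
      (by decide)
  have hy : asym4 ![E 0 1, E 3 4, E 4 5, E 2 3] = 0 :=
    asym4_eq_zero_of_forall_not_isWalk (s := ![0, 3, 4, 2]) (t := ![1, 4, 5, 3])
      (fun i => by fin_cases i <;> rfl) (by decide)
  have hx : asym4 ![E 0 1, E 3 4, E 4 5, E 1 2] = 0 :=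
    asym4_eq_zero_of_forall_not_isWalk (s := ![0, 3, 4, 1]) (t := ![1, 4, 5, 2])
      (fun i => by fin_cases i <;> rfl) (by decide)
  rw [hxy, hlhs, hy, hx, mul_zero, zero_mul, add_zero]
  exact ne_of_apply_ne (· 0 5) (by simp [E])
end
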